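/- Let G = (V,E) be finite undirected, V = L ∪ F disjoint, and suppose S ⊆ L is such that w(G[(V\S) ∪ {u}]) = w(G[V\S]) for some u ∈ S. Then w^L(G[V\S]) = w^L(G[(V\S) ∪ {u}]). -/

import Mathlib

/-!
Maximum matchings of `G[W]` stay maximum in `G[W ∪ {u}]` since the sizes agree, which gives
`w^L(G[W ∪ {u}]) ≤ w^L(G[W])`. Conversely, let `A` be a maximum matching of `G[W ∪ {u}]` realising
`w^L` and covering `u`, and `B` a maximum matching of `G[W]`, so `u` is uncovered by `B`. The
alternating path of `A ∆ B` starting at `u` cannot end with an `A`-edge, since it would augment `B`;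
so it ends at a vertex `x` uncovered by `A`, and switching `A` along it gives a maximum matching
of `G[W]` covering `(V(A) \ {u}) ∪ {x}`. As `u ∈ L`, this covers at most as many vertices of `L`.
-/

variable {V : Type*} [Fintype V] [DecidableEq V]

/-- A matching of `G` all of whose edges lie inside the vertex set `W`
(i.e. a matching of the induced subgraph `G[W]`). -/
def IsMatchingOn (G : SimpleGraph V) (W : Set V) (M : Finset (Sym2 V)) : Prop :=
  (∀ e ∈ M, e ∈ G.edgeSet) ∧ (∀ e ∈ M, ∀ v ∈ e, v ∈ W) ∧
  (M : Set (Sym2 V)).Pairwise fun e f => ∀ v, v ∈ e → v ∉ f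

/-- Vertices covered by a set of edges. -/
def mcovered (M : Finset (Sym2 V)) : Set V := {v | ∃ e ∈ M, v ∈ e}

/-- `w(G[W])`: maximum cardinality of a matching of `G[W]`. -/
noncomputable def mmax (G : SimpleGraph V) (W : Set V) : ℕ :=
  sSup {n | ∃ M, IsMatchingOn G W M ∧ M.card = n}

/-- `w^L(G[W])`: minimum number of `L`-vertices covered over maximum matchings of `G[W]`. -/
noncomputable def mwL (G : SimpleGraph V) (L W : Set V) : ℕ :=
  sInf {k | ∃ M, IsMatchingOn G W M ∧ M.card = mmax G W ∧ (mcovered M ∩ L).ncard = k}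

lemma Set.ncard_insert_sdiff_singleton_inter_le {α : Type*} [Finite α] {s L : Set α} {u : α}
    (hus : u ∈ s) (huL : u ∈ L) (x : α) : (insert x (s \ {u}) ∩ L).ncard ≤ (s ∩ L).ncard := by
  calc (insert x (s \ {u}) ∩ L).ncard
      ≤ (insert x ((s ∩ L) \ {u})).ncard := Set.ncard_le_ncard (by grind)
    _ ≤ ((s ∩ L) \ {u}).ncard + 1 := Set.ncard_insert_le _ _
    _ = (s ∩ L).ncard := Set.ncard_sdiff_singleton_add_one ⟨hus, huL⟩

lemma Set.insert_sdiff_pair {α : Type*} {s : Set α} {u v : α} (hv : v ∈ s) (huv : u ≠ v) :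
    insert v (s \ {u, v}) = s \ {u} := by
  ext w
  grind

section Matching

omit [Fintype V] [DecidableEq V]

variable {G : SimpleGraph V} {W : Set V} {M N : Finset (Sym2 V)}

lemma mem_mcovered_of_mem {e : Sym2 V} (he : e ∈ M) {v : V} (hv : v ∈ e) : v ∈ mcovered M :=
  ⟨e, he, hv⟩

lemma exists_mk_mem_of_mem_mcovered {u : V} (hu : u ∈ mcovered M) : ∃ v, s(u, v) ∈ M := by
  obtain ⟨e, he, hue⟩ := hu
  obtain ⟨v, rfl⟩ := Sym2.mem_iff_exists.1 hue
  exact ⟨v, he⟩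

lemma mcovered_mono (h : M ⊆ N) : mcovered M ⊆ mcovered N :=
  fun _ ⟨e, he, hv⟩ => ⟨e, h he, hv⟩

namespace IsMatchingOn

lemma subset (hM : IsMatchingOn G W M) (hNM : N ⊆ M) : IsMatchingOn G W N :=
  ⟨fun e he => hM.1 e (hNM he), fun e he => hM.2.1 e (hNM he), hM.2.2.mono (by simpa)⟩

lemma mono_set {W' : Set V} (hM : IsMatchingOn G W M) (hW : W ⊆ W') : IsMatchingOn G W' M :=
  ⟨hM.1, fun e he v hv => hW (hM.2.1 e he v hv), hM.2.2⟩

lemma adj (hM : IsMatchingOn G W M) {a b : V} (he : s(a, b) ∈ M) : G.Adj a b :=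
  hM.1 _ he

lemma mem_of_mem_mcovered (hM : IsMatchingOn G W M) {v : V} (hv : v ∈ mcovered M) : v ∈ W := by
  obtain ⟨e, he, hve⟩ := hv
  exact hM.2.1 e he v hve

lemma eq_of_mem_of_mem (hM : IsMatchingOn G W M) {e f : Sym2 V} (he : e ∈ M) (hf : f ∈ M)
    {v : V} (hve : v ∈ e) (hvf : v ∈ f) : e = f := by
  by_contra hne
  exact hM.2.2 he hf hne v hve hvf

lemma of_notMem_mcovered {u : V} (hM : IsMatchingOn G (W ∪ {u}) M) (hu : u ∉ mcovered M) :
    IsMatchingOn G W M := by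
  refine ⟨hM.1, fun e he v hv => ?_, hM.2.2⟩
  rcases hM.2.1 e he v hv with hvW | rfl
  exacts [hvW, absurd ⟨e, he, hv⟩ hu]

end IsMatchingOn

lemma mwL_le (L : Set V) (hM : IsMatchingOn G W M) (hcard : M.card = mmax G W) :
    mwL G L W ≤ (mcovered M ∩ L).ncard :=
  Nat.sInf_le ⟨M, hM, hcard, rfl⟩

end Matching

section Exchange

omit [Fintype V]

variable {G : SimpleGraph V} {W : Set V} {M : Finset (Sym2 V)}

lemma mcovered_union (M N : Finset (Sym2 V)) : mcovered (M ∪ N) = mcovered M ∪ mcovered N := by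
  ext v
  simp only [mcovered, Finset.mem_union, Set.mem_union, Set.mem_ofPred_eq]
  grind

lemma mcovered_insert_mk (a b : V) (M : Finset (Sym2 V)) :
    mcovered (insert s(a, b) M) = insert a (insert b (mcovered M)) := by
  ext v
  simp only [mcovered, Finset.mem_insert, Set.mem_insert_iff, Set.mem_ofPred_eq]
  grind

namespace IsMatchingOn

lemma mcovered_erase_mk (hM : IsMatchingOn G W M) {a b : V} (he : s(a, b) ∈ M) :
    mcovered (M.erase s(a, b)) = mcovered M \ {a, b} := by
  ext v
  constructor
  · rintro ⟨f, hf, hvf⟩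
    refine ⟨⟨f, Finset.mem_of_mem_erase hf, hvf⟩, fun hv => Finset.ne_of_mem_erase hf ?_⟩
    exact hM.eq_of_mem_of_mem (Finset.mem_of_mem_erase hf) he hvf (by simpa [Sym2.mem_iff] using hv)
  · rintro ⟨⟨f, hf, hvf⟩, hv⟩
    refine ⟨f, Finset.mem_erase.2 ⟨?_, hf⟩, hvf⟩
    rintro rfl
    exact hv (by simpa [Sym2.mem_iff] using hvf)

lemma insert_mk (hM : IsMatchingOn G W M) {a b : V} (hab : G.Adj a b) (ha : a ∈ W) (hb : b ∈ W)
    (haM : a ∉ mcovered M) (hbM : b ∉ mcovered M) : IsMatchingOn G W (insert s(a, b) M) := by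
  have : Std.Symm (fun e f : Sym2 V => ∀ v, v ∈ e → v ∉ f) := ⟨fun _ _ h v hv hv' => h v hv' hv⟩
  refine ⟨?_, ?_, ?_⟩
  · simpa [Finset.forall_mem_insert] using ⟨hab, hM.1⟩
  · simpa [Finset.forall_mem_insert, Sym2.mem_iff] using ⟨⟨ha, hb⟩, hM.2.1⟩
  · rw [Finset.coe_insert, Set.pairwise_insert_of_symm]
    refine ⟨hM.2.2, fun f hf _ v hv hvf => ?_⟩
    rcases Sym2.mem_iff.1 hv with rfl | rfl
    exacts [haM ⟨f, hf, hvf⟩, hbM ⟨f, hf, hvf⟩]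

lemma exchange_mk (hM : IsMatchingOn G W M) {u v x : V} (hf : s(v, x) ∈ M) (huv : G.Adj u v)
    (hu : u ∈ W) (huM : u ∉ mcovered M) :
    IsMatchingOn G W (insert s(u, v) (M.erase s(v, x))) ∧
      (insert s(u, v) (M.erase s(v, x))).card = M.card ∧
      mcovered (insert s(u, v) (M.erase s(v, x))) = insert u (mcovered M \ {x}) := by
  have hvM : v ∈ mcovered M := mem_mcovered_of_mem hf (Sym2.mem_mk_left v x)
  have hcov := hM.mcovered_erase_mk hf
  refine ⟨(hM.subset (M.erase_subset _)).insert_mk huv hu (hM.mem_of_mem_mcovered hvM)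
    (by simp [hcov, huM]) (by simp [hcov]), ?_, ?_⟩
  · rw [Finset.card_insert_of_notMem fun h => huM (mem_mcovered_of_mem
      (Finset.mem_of_mem_erase h) (Sym2.mem_mk_left u v)), Finset.card_erase_add_one hf]
  · rw [mcovered_insert_mk, hcov, Set.pair_comm, Set.insert_sdiff_pair hvM (hM.adj hf).ne.symm]

end IsMatchingOn

/-- What switching `A` along an alternating path of `A ∆ B` from `u` to a vertex `x` missed by `A`
produces. -/
def HasExchange (G : SimpleGraph V) (W : Set V) (A B : Finset (Sym2 V)) (u : V) : Prop :=
  ∃ C x, IsMatchingOn G W C ∧ C.card = A.card ∧ C ⊆ A ∪ B ∧ x ∉ mcovered A ∧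
    mcovered C = insert x (mcovered A \ {u})

lemma HasExchange.of_erase {A B : Finset (Sym2 V)} (hA : IsMatchingOn G W A)
    (hB : IsMatchingOn G W B) {u v x : V} (he : s(u, v) ∈ A) (hf : s(v, x) ∈ B)
    (huB : u ∉ mcovered B) (hxA' : x ∈ mcovered (A.erase s(u, v)))
    (h : HasExchange G W (A.erase s(u, v)) (insert s(u, v) (B.erase s(v, x))) x) :
    HasExchange G W A B u := by
  obtain ⟨C, y, hC, hCcard, hCsub, hyA', hcovC⟩ := h
  have hcovA := hA.mcovered_erase_mk he
  have hvA : v ∈ mcovered A := mem_mcovered_of_mem he (Sym2.mem_mk_right u v)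
  have heC : s(u, v) ∉ C := by
    intro heC
    have hu := mem_mcovered_of_mem heC (Sym2.mem_mk_left u v)
    have hv := mem_mcovered_of_mem heC (Sym2.mem_mk_right u v)
    simp [hcovC, hcovA] at hu hv
    exact (hA.adj he).ne (hu.trans hv.symm)
  have hCsub' : C ⊆ A.erase s(u, v) ∪ B.erase s(v, x) :=
    (Finset.subset_insert_iff_of_notMem heC).1 (by rwa [← Finset.union_insert])
  have huvC : u ∉ mcovered C ∧ v ∉ mcovered C := by
    have := mcovered_mono hCsub'
    rw [mcovered_union, hcovA, hB.mcovered_erase_mk hf] at this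
    exact ⟨fun h => by simpa [huB] using this h, fun h => by simpa using this h⟩
  have hxC : x ∉ mcovered C := by
    rw [hcovC]
    rintro (rfl | h)
    exacts [hyA' hxA', h.2 rfl]
  refine ⟨insert s(v, x) C, y, hC.insert_mk (hB.adj hf) (hA.mem_of_mem_mcovered hvA)
    (hB.mem_of_mem_mcovered (mem_mcovered_of_mem hf (Sym2.mem_mk_right v x))) huvC.2 hxC,
    ?_, ?_, ?_, ?_⟩
  · rw [Finset.card_insert_of_notMem fun h => huvC.2 (mem_mcovered_of_mem h (Sym2.mem_mk_left v x)),
      hCcard, Finset.card_erase_add_one he]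
  · exact Finset.insert_subset (Finset.mem_union_right _ hf) (hCsub'.trans
      (Finset.union_subset_union (A.erase_subset _) (B.erase_subset _)))
  · have hyC : y ∈ mcovered C := hcovC ▸ Set.mem_insert y _
    rw [hcovA] at hyA'
    intro hyA
    exact hyA' ⟨hyA, by rintro (rfl | rfl); exacts [huvC.1 hyC, huvC.2 hyC]⟩
  · rw [mcovered_insert_mk, hcovC, Set.insert_comm x, Set.insert_comm v,
      Set.insert_sdiff_singleton, Set.insert_eq_of_mem hxA', hcovA,
      Set.insert_sdiff_pair hvA (hA.adj he).ne]

end Exchange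

section Maximum

omit [DecidableEq V]

variable {G : SimpleGraph V} {W : Set V} {M : Finset (Sym2 V)}

lemma bddAbove_matching_card (G : SimpleGraph V) (W : Set V) :
    BddAbove {n | ∃ M, IsMatchingOn G W M ∧ M.card = n} :=
  ⟨Fintype.card (Sym2 V), by rintro _ ⟨M, -, rfl⟩; exact Finset.card_le_univ M⟩

lemma IsMatchingOn.card_le_mmax (hM : IsMatchingOn G W M) : M.card ≤ mmax G W :=
  le_csSup (bddAbove_matching_card G W) ⟨M, hM, rfl⟩

lemma exists_isMatchingOn_card_eq_mmax (G : SimpleGraph V) (W : Set V) :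
    ∃ M, IsMatchingOn G W M ∧ M.card = mmax G W :=
  Nat.sSup_mem (s := {n | ∃ M, IsMatchingOn G W M ∧ M.card = n})
    ⟨0, ∅, ⟨by simp, by simp, by simp⟩, rfl⟩ (bddAbove_matching_card G W)

lemma exists_isMatchingOn_mwL (G : SimpleGraph V) (L W : Set V) :
    ∃ M, IsMatchingOn G W M ∧ M.card = mmax G W ∧ (mcovered M ∩ L).ncard = mwL G L W :=
  let ⟨M, hM, hcard⟩ := exists_isMatchingOn_card_eq_mmax G W
  Nat.sInf_mem (s := {k | ∃ M, IsMatchingOn G W M ∧ M.card = mmax G W ∧ (mcovered M ∩ L).ncard = k})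
    ⟨_, M, hM, hcard, rfl⟩

lemma mwL_le_of_subset_of_mmax_eq {W' : Set V} (L : Set V) (hW : W ⊆ W')
    (h : mmax G W' = mmax G W) : mwL G L W' ≤ mwL G L W := by
  obtain ⟨M, hM, hcard, hML⟩ := exists_isMatchingOn_mwL G L W
  exact hML ▸ mwL_le L (hM.mono_set hW) (hcard.trans h.symm)

end Maximum

section Switching

variable {G : SimpleGraph V} {W : Set V}

lemma IsMatchingOn.mem_mcovered_of_card_eq_mmax {M : Finset (Sym2 V)} (hM : IsMatchingOn G W M)
    (hcard : M.card = mmax G W) {a b : V} (hab : G.Adj a b) (ha : a ∈ W) (hb : b ∈ W)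
    (haM : a ∉ mcovered M) : b ∈ mcovered M := by
  by_contra hbM
  have hbig := (hM.insert_mk hab ha hb haM hbM).card_le_mmax
  rw [Finset.card_insert_of_notMem fun he => haM (mem_mcovered_of_mem he (Sym2.mem_mk_left a b))]
    at hbig
  omega

theorem IsMatchingOn.hasExchange {A B : Finset (Sym2 V)} (hA : IsMatchingOn G W A)
    (hB : IsMatchingOn G W B) (hBmax : B.card = mmax G W) {u : V} (huA : u ∈ mcovered A)
    (huB : u ∉ mcovered B) : HasExchange G W A B u := by
  induction A using Finset.strongInduction generalizing B u with
  | H A ih =>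
  obtain ⟨v, he⟩ := exists_mk_mem_of_mem_mcovered huA
  have hvA : v ∈ mcovered A := mem_mcovered_of_mem he (Sym2.mem_mk_right u v)
  have hvB : v ∈ mcovered B := hB.mem_mcovered_of_card_eq_mmax hBmax (hA.adj he)
    (hA.mem_of_mem_mcovered huA) (hA.mem_of_mem_mcovered hvA) huB
  obtain ⟨x, hf⟩ := exists_mk_mem_of_mem_mcovered hvB
  have hxW := hB.mem_of_mem_mcovered (mem_mcovered_of_mem hf (Sym2.mem_mk_right v x))
  have hxu : x ≠ u := fun h => huB (h ▸ mem_mcovered_of_mem hf (Sym2.mem_mk_right v x))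
  by_cases hxA' : x ∈ mcovered (A.erase s(u, v))
  · -- The alternating path goes on along the `A`-edge at `x`.
    obtain ⟨hB', hB'card, hcovB'⟩ := hB.exchange_mk hf (hA.adj he)
      (hA.mem_of_mem_mcovered huA) huB
    exact .of_erase hA hB he hf huB hxA' <| ih _ (Finset.erase_ssubset he)
      (hA.subset (A.erase_subset _)) hB' (hB'card.trans hBmax) hxA' (by simp [hcovB', hxu])
  · have hxA : x ∉ mcovered A := by
      simpa [hA.mcovered_erase_mk he, hxu, (hB.adj hf).ne.symm] using hxA'
    rw [Sym2.eq_swap] at he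
    obtain ⟨hC, hCcard, hcovC⟩ := hA.exchange_mk he (hB.adj hf).symm hxW hxA
    refine ⟨_, x, hC, hCcard, Finset.insert_subset ?_ ((A.erase_subset _).trans
      Finset.subset_union_left), hxA, hcovC⟩
    exact Finset.mem_union_right _ (Sym2.eq_swap ▸ hf)

lemma mwL_le_mwL_union_singleton {L : Set V} {u : V} (huL : u ∈ L) (huW : u ∉ W)
    (h : mmax G (W ∪ {u}) = mmax G W) : mwL G L W ≤ mwL G L (W ∪ {u}) := by
  obtain ⟨M, hM, hMcard, hML⟩ := exists_isMatchingOn_mwL G L (W ∪ {u})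
  rw [← hML]
  by_cases huM : u ∈ mcovered M
  · obtain ⟨B, hB, hBcard⟩ := exists_isMatchingOn_card_eq_mmax G W
    obtain ⟨C, x, hC, hCcard, -, hxM, hcovC⟩ := hM.hasExchange
      (hB.mono_set Set.subset_union_left) (hBcard.trans h.symm) huM
      fun hu => huW (hB.mem_of_mem_mcovered hu)
    have huC : u ∉ mcovered C := by
      rw [hcovC]
      rintro (rfl | hu)
      exacts [hxM huM, hu.2 rfl]
    calc mwL G L W ≤ (mcovered C ∩ L).ncard :=
          mwL_le L (hC.of_notMem_mcovered huC) (by rw [hCcard, hMcard, h])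
      _ ≤ (mcovered M ∩ L).ncard := by
        rw [hcovC]; exact Set.ncard_insert_sdiff_singleton_inter_le huM huL x
  · exact mwL_le L (hM.of_notMem_mcovered huM) (hMcard.trans h)

end Switching

theorem stmt13_general (G : SimpleGraph V) (L S : Set V) (hS : S ⊆ L)
    (u : V) (hu : u ∈ S)
    (h : mmax G (Sᶜ ∪ {u}) = mmax G Sᶜ) :
    mwL G L Sᶜ = mwL G L (Sᶜ ∪ {u}) :=
  le_antisymm (mwL_le_mwL_union_singleton (hS hu) (fun huS => huS hu) h)
    (mwL_le_of_subset_of_mmax_eq L Set.subset_union_left h)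

/-- if adding `u ∈ S` does not increase the maximum matching size,
the worst-case leader coverage is unchanged. -/
theorem stmt13 (G : SimpleGraph V) (L F S : Set V)
    (hpart : L ∪ F = Set.univ) (hdisj : Disjoint L F) (hS : S ⊆ L)
    (u : V) (hu : u ∈ S)
    (h : mmax G (Sᶜ ∪ {u}) = mmax G Sᶜ) :
    mwL G L Sᶜ = mwL G L (Sᶜ ∪ {u}) :=
  stmt13_general G L S hS u hu h
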